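/- Let d be a prime, ω : ℂ a primitive d-th root of unity, and C : Matrix (Fin p) (Fin q) (ZMod d) any matrix over ZMod d. Let N be the complex matrix with rows indexed by a : Fin p → ZMod d, columns indexed by b : Fin q → ZMod d, and entries N a b = ω^(Σ_{u,v} a u · C u v · b v). Then the complex rank of N equals d raised to the ZMod d-rank of C: Matrix.rank N = d ^ (Matrix.rank C). -/

import Mathlib

/-!
The column of `N` indexed by `b` is the additive character `a ↦ ω ^ (a ⬝ᵥ C *ᵥ b)` of
`Fin p → ZMod d`. As `ω` is primitive, the character `a ↦ ω ^ (a ⬝ᵥ c)` determines `c`, and distinct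
characters are linearly independent, so the rank of `N` is the number of values of `C *ᵥ b`:
the size `d ^ rank C` of the column space of `C` over the field `ZMod d`.
-/

open Matrix

namespace AddChar

variable {R M n : Type*} [CommRing R] [CommMonoid M] [Fintype n]

def dotProductChar (ψ : AddChar R M) (c : n → R) : AddChar (n → R) M where
  toFun a := ψ (a ⬝ᵥ c)
  map_zero_eq_one' := by rw [zero_dotProduct, map_zero_eq_one]
  map_add_eq_mul' a b := by rw [add_dotProduct, map_add_eq_mul]

@[simp]
lemma dotProductChar_apply (ψ : AddChar R M) (c a : n → R) :
    dotProductChar ψ c a = ψ (a ⬝ᵥ c) :=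
  rfl

lemma dotProductChar_injective {ψ : AddChar R M} (hψ : Function.Injective ψ) :
    Function.Injective (dotProductChar ψ : (n → R) → AddChar (n → R) M) := by
  intro c c' h
  refine dotProduct_eq c c' fun a => ?_
  rw [dotProduct_comm, dotProduct_comm c']
  exact hψ (by simpa using DFunLike.congr_fun h a)

lemma zmodChar_injective {k : ℕ} [NeZero k] {ζ : M} (hζ : IsPrimitiveRoot ζ k) :
    Function.Injective (zmodChar k hζ.pow_eq_one) := fun x y h =>
  ZMod.val_injective k (hζ.pow_inj (ZMod.val_lt x) (ZMod.val_lt y) h)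

end AddChar

namespace Matrix

variable {m n ι K : Type*} [Field K] [Fintype n]

lemma rank_eq_natCard_range_of_col_eq_comp {A : Matrix m n K} {e : ι → m → K}
    (he : LinearIndependent K e) {g : n → ι} (hcol : A.col = e ∘ g) :
    A.rank = Nat.card (Set.range g) := by
  have hrange : Set.range A.col = Set.range (e ∘ ((↑) : Set.range g → ι)) := by
    rw [hcol, Set.range_comp, Set.range_comp, Subtype.range_coe]
  have := Fintype.ofFinite (Set.range g)
  rw [rank_eq_finrank_span_cols, hrange,
    finrank_span_eq_card (he.comp _ Subtype.val_injective), Nat.card_eq_fintype_card]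

lemma natCard_range_mulVec [Finite m] (A : Matrix m n K) :
    Nat.card (Set.range A.mulVec) = Nat.card K ^ A.rank := by
  rw [rank, ← Module.natCard_eq_pow_finrank]
  rfl

end Matrix

theorem rank_character_matrix
    (d p q : ℕ) (hd : Nat.Prime d) [NeZero d] (ω : ℂ) (hω : IsPrimitiveRoot ω d)
    (C : Matrix (Fin p) (Fin q) (ZMod d)) :
    Matrix.rank (Matrix.of fun (a : Fin p → ZMod d) (b : Fin q → ZMod d) =>
        ω ^ (∑ u, ∑ v, a u * C u v * b v).val)
      = d ^ Matrix.rank C := by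
  have := Fact.mk hd
  let ψ := AddChar.zmodChar d hω.pow_eq_one
  have hcol : (Matrix.of fun (a : Fin p → ZMod d) (b : Fin q → ZMod d) =>
      ω ^ (∑ u, ∑ v, a u * C u v * b v).val).col
      = (⇑) ∘ AddChar.dotProductChar ψ ∘ C.mulVec := by
    ext b a
    simp [ψ, AddChar.zmodChar_apply, dotProduct, mulVec, Finset.mul_sum, mul_assoc]
  have hchars := (AddChar.linearIndependent (Fin p → ZMod d) ℂ).comp _
    (AddChar.dotProductChar_injective (AddChar.zmodChar_injective hω))
  rw [rank_eq_natCard_range_of_col_eq_comp hchars hcol, natCard_range_mulVec, Nat.card_zmod]
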